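/- arXiv:1704.02731 — 3 statements merged into one kernel-verified Lean document; each statement's English description precedes it below -/
import Mathlib

section
/- Let M be an n×n rational symmetric matrix which is negative semi-definite with one-dimensional kernel spanned by a vector with all positive entries. If v is a rational vector with Mv having all entries ≥ 0 (nef condition), then Mv = 0, i.e. v is a multiple of the kernel vector. -/
open scoped Matrix

/-- Zariski's lemma, linear-algebra form: Let `M` be an `n×n` rational
symmetric matrix which is negative semi-definite and whose kernel is one-dimensional,
spanned by a vector `z` with all positive entries.  If `v` is a rational vector such that
all entries of `M v` are `≥ 0` (the nef condition), then `M v = 0`. -/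
theorem stmt_9 (n : ℕ) (M : Matrix (Fin n) (Fin n) ℚ)
    (hsym : M.IsSymm)
    (hnsd : ∀ x : Fin n → ℚ, x ⬝ᵥ M.mulVec x ≤ 0)
    (z : Fin n → ℚ) (hz : ∀ i, 0 < z i) (hzker : M.mulVec z = 0)
    (hker : ∀ x : Fin n → ℚ, M.mulVec x = 0 → ∃ c : ℚ, x = c • z)
    (v : Fin n → ℚ) (hv : ∀ i, 0 ≤ M.mulVec v i) :
    M.mulVec v = 0 := by
  have key : z ⬝ᵥ M.mulVec v = 0 := by
    rw [Matrix.dotProduct_mulVec, ← Matrix.mulVec_transpose, hsym.eq, hzker,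
      zero_dotProduct]
  have hsum : ∑ i, z i * M.mulVec v i = 0 := key
  have hz0 : ∀ i ∈ Finset.univ, z i * M.mulVec v i = 0 :=
    (Finset.sum_eq_zero_iff_of_nonneg (fun i _ =>
      mul_nonneg (hz i).le (hv i))).mp hsum
  funext i
  have := hz0 i (Finset.mem_univ i)
  have := mul_eq_zero.mp this
  rcases this with h | h
  · exact absurd h (hz i).ne'
  · exact h
end

section
/- Let V be a finite-dimensional ℚ-vector space with a nondegenerate symmetric bilinear form q, and let T be an isometry of (V, q) which preserves a full lattice L ⊂ V. Suppose there is a T-invariant subspace U ⊆ V on which T acts with finite order and such that the restriction of q to U is nondegenerate of signature making q|_{U^⊥} negative definite. Then T has finite order on V. -/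
/-!
Let `n > 0` with `T ^ n` trivial on `U`. Since `q` is nondegenerate on `U`, `V = U ⊕ U^⊥`, and
the isometry `T ^ n` fixes `U` pointwise, hence preserves `U^⊥`. On `U^⊥` the form `-q` is
positive definite and `L ∩ U^⊥` is a full lattice preserved by `T ^ n`. A `ℤ`-basis of this
lattice is a `ℚ`-basis of `U^⊥` in which lattice vectors have integer coordinates; by
Cauchy–Schwarz against the dual basis these coordinates are bounded on vectors of bounded length,
so the images of the basis under the powers of `T ^ n` range over a finite set. Two powers of
`T ^ n` therefore agree on `U^⊥`, so `T ^ n` has finite order on `U^⊥`, and then on all of `V`.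
-/

open Module Submodule nonZeroDivisors

namespace LinearMap.BilinForm

lemma apply_self_nonneg_of_pos {R M : Type*} [CommSemiring R] [PartialOrder R]
    [AddCommMonoid M] [Module R M] {B : LinearMap.BilinForm R M}
    (hpos : ∀ x, x ≠ 0 → 0 < B x x) (x : M) : 0 ≤ B x x := by
  rcases eq_or_ne x 0 with rfl | hx
  · simp
  · exact (hpos x hx).le

lemma apply_pow_apply_pow {R M : Type*} [CommSemiring R] [AddCommMonoid M] [Module R M]
    {B : LinearMap.BilinForm R M} {f : Module.End R M} (hf : ∀ x y, B (f x) (f y) = B x y)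
    (k : ℕ) (x y : M) : B ((f ^ k) x) ((f ^ k) y) = B x y := by
  induction k with
  | zero => rfl
  | succ k ih => rw [pow_succ', Module.End.mul_apply, Module.End.mul_apply, hf, ih]

theorem finite_setOf_mem_apply_self_le {K V ι : Type*} [Field K] [LinearOrder K]
    [IsStrictOrderedRing K] [FloorRing K] [AddCommGroup V] [Module K V] [Fintype ι]
    [DecidableEq ι] {p : LinearMap.BilinForm K V} (hp : p.IsSymm)
    (hpos : ∀ x, x ≠ 0 → 0 < p x x) (b : Basis ι K V) {S : Set V}
    (hS : ∀ x ∈ S, ∀ i, b.repr x i ∈ Set.range ((↑) : ℤ → K)) (C : K) :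
    {x ∈ S | p x x ≤ C}.Finite := by
  have hs := apply_self_nonneg_of_pos hpos
  have hnd : p.Nondegenerate := (p.nondegenerate_iff' hs (p.isSymm_iff.mp hp)).mpr hpos
  set D := p.dualBasis hnd b
  have hrepr (x : V) (i : ι) : b.repr x i = p x (D i) := by
    rw [← p.dualBasis_repr_apply hnd D, p.dualBasis_dualBasis hnd hp]
  set N := ⌈C * ∑ i, p (D i) (D i)⌉
  have hsub : {x ∈ S | p x x ≤ C} ⊆
      b.equivFun ⁻¹' Set.univ.pi fun _ => ((↑) : ℤ → K) '' Set.Icc (-N) N := by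
    rintro x ⟨hx, hxC⟩ i -
    obtain ⟨c, hc⟩ := hS x hx i
    refine ⟨c, ?_, by simpa using hc⟩
    have hcN : (c : K) ^ 2 ≤ N := calc
      (c : K) ^ 2 = p x (D i) ^ 2 := by rw [hc, hrepr]
      _ ≤ p x x * p (D i) (D i) := p.apply_sq_le_of_symm hs (p.isSymm_iff.mp hp) _ _
      _ ≤ C * ∑ j, p (D j) (D j) := by
        refine mul_le_mul hxC ?_ (hs _) ((hs x).trans hxC)
        exact Finset.single_le_sum (f := fun j => p (D j) (D j)) (fun j _ => hs _)
          (Finset.mem_univ i)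
      _ ≤ N := Int.le_ceil _
    have : c ^ 2 ≤ N := by exact_mod_cast hcN
    constructor <;> nlinarith [Int.le_self_sq c, Int.le_self_sq (-c)]
  exact ((Set.Finite.pi fun _ => (Set.finite_Icc _ _).image _).preimage
    b.equivFun.injective.injOn).subset hsub

lemma isCompl_orthogonal_of_forall_exists_ne_zero {K V : Type*} [Field K] [AddCommGroup V]
    [Module K V] [FiniteDimensional K V] {B : LinearMap.BilinForm K V} (hB : B.IsSymm)
    {U : Submodule K V} (hU : ∀ x ∈ U, x ≠ 0 → ∃ y ∈ U, B x y ≠ 0) :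
    IsCompl U (B.orthogonal U) := by
  refine (B.isCompl_orthogonal_iff_disjoint hB.isRefl).mpr (disjoint_def.mpr fun x hxU hx => ?_)
  by_contra hx0
  obtain ⟨y, hyU, hxy⟩ := hU x hxU hx0
  exact hxy (by rw [hB.eq]; exact hx y hyU)

lemma apply_mem_orthogonal_of_forall_apply_eq_self {R M : Type*} [CommSemiring R]
    [AddCommMonoid M] [Module R M] {B : LinearMap.BilinForm R M} {f : Module.End R M}
    (hf : ∀ x y, B (f x) (f y) = B x y) {U : Submodule R M} (hU : ∀ u ∈ U, f u = u) :
    ∀ w ∈ B.orthogonal U, f w ∈ B.orthogonal U :=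
  fun w hw u hu => by
    rw [← hU u hu, hf]
    exact hw u hu

end LinearMap.BilinForm

namespace Module.End

variable {R M : Type*} [Semiring R] [AddCommMonoid M] [Module R M]

lemma exists_pow_eq_one_of_pow_eq_pow {f : Module.End R M} (hf : Function.Injective f)
    {k l : ℕ} (hkl : k ≠ l) (h : f ^ k = f ^ l) : ∃ n, 0 < n ∧ f ^ n = 1 := by
  wlog hlt : k < l generalizing k l
  · exact this hkl.symm h.symm (by omega)
  refine ⟨l - k, by omega, LinearMap.ext fun x => ?_⟩
  have hinj : Function.Injective (f ^ k) := by
    rw [coe_pow]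
    exact hf.iterate k
  apply hinj
  rw [← mul_apply, ← pow_add, Nat.add_sub_cancel' hlt.le, ← h, one_apply]

lemma pow_eq_one_of_codisjoint {f : Module.End R M} {U W : Submodule R M}
    (hUW : Codisjoint U W) (hU : ∀ u ∈ U, f u = u) (hW : ∀ w ∈ W, f w ∈ W) {m : ℕ}
    (hm : f.restrict hW ^ m = 1) : f ^ m = 1 := by
  refine LinearMap.ext_on_codisjoint hUW (fun u hu => ?_) (fun w hw => ?_)
  · rw [coe_pow]
    exact Function.iterate_fixed (hU u hu) m
  · have := congr_arg (fun g : Module.End R W => (g ⟨w, hw⟩ : M)) hm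
    rwa [pow_restrict, LinearMap.restrict_apply] at this

end Module.End

section Lattice

variable {V : Type*} [AddCommGroup V] [Module ℚ V]

lemma exists_smul_mem_of_span_eq_top {L : Submodule ℤ V} (hL : span ℚ (L : Set V) = ⊤)
    (v : V) : ∃ d : ℤ, d ≠ 0 ∧ d • v ∈ L := by
  have := isLocalizedModule_id ℤ⁰ V ℚ
  have hv : v ∈ L.localized' ℚ ℤ⁰ LinearMap.id := by
    simp [localized'_eq_span, hL]
  obtain ⟨m, hm, s, rfl⟩ := hv
  refine ⟨s, nonZeroDivisors.coe_ne_zero s, ?_⟩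
  rwa [← Submonoid.smul_def, IsLocalizedModule.mk'_cancel']

lemma isLocalizedModule_subtype_of_exists_smul_mem {L : Submodule ℤ V}
    (hL : ∀ v : V, ∃ d : ℤ, d ≠ 0 ∧ d • v ∈ L) :
    IsLocalizedModule ℤ⁰ L.subtype where
  map_units d := by
    rw [← (Algebra.lsmul ℤ (A := ℚ) ℤ V).commutes]
    exact (IsLocalization.map_units ℚ d).map _
  surj v := by
    obtain ⟨d, hd, hv⟩ := hL v
    exact ⟨(⟨d • v, hv⟩, ⟨d, mem_nonZeroDivisors_of_ne_zero hd⟩), rfl⟩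
  exists_of_eq h := ⟨1, by simpa using Subtype.ext h⟩

theorem exists_pow_eq_one_of_isometry_of_lattice {p : LinearMap.BilinForm ℚ V}
    (hp : p.IsSymm) (hpos : ∀ x, x ≠ 0 → 0 < p x x) {f : Module.End ℚ V}
    (hf : ∀ x y, p (f x) (f y) = p x y)
    {L : Submodule ℤ V} (hLfg : L.FG) (hL : ∀ v : V, ∃ d : ℤ, d ≠ 0 ∧ d • v ∈ L)
    (hfL : ∀ x ∈ L, f x ∈ L) : ∃ n, 0 < n ∧ f ^ n = 1 := by
  classical
  have := isLocalizedModule_subtype_of_exists_smul_mem hL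
  have : Module.Finite ℤ L := Module.Finite.iff_fg.mpr hLfg
  have : IsTorsionFree ℤ V := IsTorsionFree.trans_faithfulSMul ℤ ℚ V
  let bL := Free.chooseBasis ℤ L
  let b := bL.ofIsLocalizedModule ℚ ℤ⁰ L.subtype
  have hbL (i) : b i ∈ L := by simp [b]
  have hint : ∀ x ∈ L, ∀ i, b.repr x i ∈ Set.range ((↑) : ℤ → ℚ) := fun x hx i =>
    ⟨bL.repr ⟨x, hx⟩ i,
      by simpa using (bL.ofIsLocalizedModule_repr_apply ℚ ℤ⁰ L.subtype ⟨x, hx⟩ i).symm⟩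
  set C := ∑ j, p (b j) (b j)
  have horbit (k : ℕ) :
      (fun j => (f ^ k) (b j)) ∈ Set.univ.pi fun _ => {x ∈ L | p x x ≤ C} := by
    refine fun j _ => ⟨?_, ?_⟩
    · rw [Module.End.coe_pow]
      exact (Set.MapsTo.iterate hfL k) (hbL j)
    · rw [LinearMap.BilinForm.apply_pow_apply_pow hf]
      exact Finset.single_le_sum (f := fun j => p (b j) (b j))
        (fun j _ => LinearMap.BilinForm.apply_self_nonneg_of_pos hpos _) (Finset.mem_univ j)
  obtain ⟨k, -, l, -, hkl, heq⟩ := Set.infinite_univ.exists_ne_map_eq_of_mapsTo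
    (fun k _ => horbit k)
    (Set.Finite.pi fun _ =>
      LinearMap.BilinForm.finite_setOf_mem_apply_self_le hp hpos b hint C)
  have hinj : Function.Injective f := by
    refine (injective_iff_map_eq_zero f).mpr fun x hx => ?_
    by_contra hx0
    simpa [← hf x x, hx] using hpos x hx0
  exact Module.End.exists_pow_eq_one_of_pow_eq_pow hinj hkl (b.ext fun j => congr_fun heq j)

theorem exists_pow_restrict_eq_one_of_isometry_of_lattice {p : LinearMap.BilinForm ℚ V}
    (hp : p.IsSymm) {W : Submodule ℚ V} (hpos : ∀ w ∈ W, w ≠ 0 → 0 < p w w)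
    {f : Module.End ℚ V} (hf : ∀ x y, p (f x) (f y) = p x y) (hfW : ∀ w ∈ W, f w ∈ W)
    {L : Submodule ℤ V} (hLfg : L.FG) (hL : span ℚ (L : Set V) = ⊤)
    (hfL : ∀ x ∈ L, f x ∈ L) : ∃ n, 0 < n ∧ f.restrict hfW ^ n = 1 := by
  let ι : W →ₗ[ℤ] V := W.subtype.restrictScalars ℤ
  refine exists_pow_eq_one_of_isometry_of_lattice (p := p.restrict W) (L := L.comap ι)
    ⟨fun x y => hp.eq x y⟩ (fun w hw => hpos w w.2 (by simpa using hw))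
    (fun x y => hf x y) ?_ (fun w => ?_) (fun x hx => hfL x hx)
  · exact fg_of_fg_map_injective ι W.injective_subtype (hLfg.of_le (map_comap_le ι L))
  · obtain ⟨d, hd, hdw⟩ := exists_smul_mem_of_span_eq_top hL w
    exact ⟨d, hd, by simpa [ι] using hdw⟩

end Lattice

theorem stmt_12_general (V : Type*) [AddCommGroup V] [Module ℚ V] [FiniteDimensional ℚ V]
    (q : V →ₗ[ℚ] V →ₗ[ℚ] ℚ)
    (hsymm : ∀ x y, q x y = q y x)
    (T : V ≃ₗ[ℚ] V)
    (hisom : ∀ x y, q (T x) (T y) = q x y)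
    (L : Submodule ℤ V) (hLfg : L.FG)
    (hLfull : Submodule.span ℚ (L : Set V) = ⊤)
    (hTL : ∀ x ∈ L, T x ∈ L)
    (U : Submodule ℚ V)
    (hUfin : ∃ n : ℕ, 0 < n ∧ ∀ x ∈ U, (T ^ n) x = x)
    (hUnd : ∀ x ∈ U, x ≠ 0 → ∃ y ∈ U, q x y ≠ 0)
    (hUperp : ∀ v : V, (∀ u ∈ U, q v u = 0) → v ≠ 0 → q v v < 0) :
    ∃ n : ℕ, 0 < n ∧ ∀ x : V, (T ^ n) x = x := by
  obtain ⟨n, hn, hTn⟩ := hUfin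
  have hq : LinearMap.BilinForm.IsSymm q := ⟨hsymm⟩
  have hcoe (k : ℕ) (x : V) : (T.toLinearMap ^ k) x = (T ^ k) x := by
    rw [Module.End.coe_pow, LinearEquiv.coe_pow]
    rfl
  set f : Module.End ℚ V := T.toLinearMap ^ n
  have hfU : ∀ u ∈ U, f u = u := fun u hu => (hcoe n u).trans (hTn u hu)
  have hf : ∀ x y, q (f x) (f y) = q x y := LinearMap.BilinForm.apply_pow_apply_pow hisom n
  have hfL : ∀ x ∈ L, f x ∈ L := by
    rw [Module.End.coe_pow]
    exact Set.MapsTo.iterate hTL n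
  have hUW := LinearMap.BilinForm.isCompl_orthogonal_of_forall_exists_ne_zero hq hUnd
  have hW := LinearMap.BilinForm.apply_mem_orthogonal_of_forall_apply_eq_self hf hfU
  obtain ⟨m, hm, hfm⟩ := exists_pow_restrict_eq_one_of_isometry_of_lattice (p := -q) hq.neg
    (fun w hw hw0 => neg_pos.mpr (hUperp w (fun u hu => by rw [hsymm]; exact hw u hu) hw0))
    (by simpa using hf) hW hLfg hLfull hfL
  refine ⟨n * m, Nat.mul_pos hn hm, fun x => ?_⟩
  rw [← hcoe, pow_mul, Module.End.pow_eq_one_of_codisjoint hUW.codisjoint hfU hW hfm,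
    Module.End.one_apply]

/-- Let `V` be a finite-dimensional `ℚ`-vector space with a nondegenerate
symmetric bilinear form `q`, and let `T` be an isometry of `(V, q)` preserving a full
lattice `L ⊂ V`.  Suppose there is a `T`-invariant subspace `U ⊆ V` on which `T` acts with
finite order, such that `q|_U` is nondegenerate and `q` is negative definite on `U^⊥`.
Then `T` has finite order on `V`. -/
theorem stmt_12 (V : Type*) [AddCommGroup V] [Module ℚ V] [FiniteDimensional ℚ V]
    (q : V →ₗ[ℚ] V →ₗ[ℚ] ℚ)
    (hsymm : ∀ x y, q x y = q y x)
    (hnd : ∀ v : V, (∀ w : V, q v w = 0) → v = 0)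
    (T : V ≃ₗ[ℚ] V)
    (hisom : ∀ x y, q (T x) (T y) = q x y)
    (L : Submodule ℤ V) (hLfg : L.FG)
    (hLfull : Submodule.span ℚ (L : Set V) = ⊤)
    (hTL : ∀ x ∈ L, T x ∈ L) (hTL' : ∀ x ∈ L, T.symm x ∈ L)
    (U : Submodule ℚ V)
    (hTU : ∀ x ∈ U, T x ∈ U)
    (hUfin : ∃ n : ℕ, 0 < n ∧ ∀ x ∈ U, (T ^ n) x = x)
    (hUnd : ∀ x ∈ U, x ≠ 0 → ∃ y ∈ U, q x y ≠ 0)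
    (hUperp : ∀ v : V, (∀ u ∈ U, q v u = 0) → v ≠ 0 → q v v < 0) :
    ∃ n : ℕ, 0 < n ∧ ∀ x : V, (T ^ n) x = x :=
  stmt_12_general V q hsymm T hisom L hLfg hLfull hTL U hUfin hUnd hUperp
end

section
/- Let H be a polarized pure Hodge structure of weight w whose Hodge numbers h^{p,q} vanish for p > w − c and q > w − c for some c ≥ 1 (coniveau ≥ c). For any nilpotent endomorphism N arising as the logarithm of monodromy of a degeneration with limit MHS whose weight-graded pieces are constrained by the Hodge filtration (N^k: Gr^W_{w+k} ≅ Gr^W_{w−k}), the nilpotency index of N is at most w − 2c + 2. Abstract version: if N is a nilpotent endomorphism of a bifiltered vector space (W, F) forming a limit MHS with F^{w−c+1} = 0, then N^{w−2c+2} = 0. -/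
/-!
The bigrading of a limit mixed Hodge structure is supported in the square `[c, w - c]²`:
the coniveau condition bounds the first index by `w - c`, conjugation symmetry bounds the
second one, and hard Lefschetz moves any nonzero `I^{a,b}` along the diagonal to weight `w`,
where a first index `a < c` would force the second index above `w - c`. Since `N` lowers both
indices by one, `N^m` with `m ≥ w - 2c + 1` pushes every piece out of that square.
-/

def IsHardLefschetz {R V : Type*} [Semiring R] [AddCommGroup V] [Module R V]
    (N : Module.End R V) (I : ℤ → ℤ → Submodule R V) (w : ℤ) : Prop :=
  ∀ (k : ℕ) (p q : ℤ), p + q = w + k →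
    (I p q).map (N ^ k) = I (p - k) (q - k) ∧ ∀ x ∈ I p q, (N ^ k) x = 0 → x = 0

section Bigrading

variable {R V : Type*} [Semiring R] [AddCommGroup V] [Module R V]
  {N : Module.End R V} {I : ℤ → ℤ → Submodule R V}

theorem pow_apply_mem_of_forall_apply_mem
    (hN : ∀ p q : ℤ, ∀ x ∈ I p q, N x ∈ I (p - 1) (q - 1)) (k : ℕ) {p q : ℤ} {x : V}
    (hx : x ∈ I p q) : (N ^ k) x ∈ I (p - k) (q - k) := by
  induction k with
  | zero => simpa using hx
  | succ k ih =>
    rw [pow_succ', Module.End.mul_apply]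
    convert hN _ _ _ ih using 2 <;> push_cast <;> ring

namespace IsHardLefschetz

variable {w c : ℤ}

theorem le_fst_of_add_le (hHL : IsHardLefschetz N I w)
    (hq : ∀ p q : ℤ, w - c + 1 ≤ q → I p q = ⊥) {a b : ℤ} (hab : a + b ≤ w)
    (hne : I a b ≠ ⊥) : c ≤ a := by
  by_contra! hac
  obtain ⟨k, hk⟩ : ∃ k : ℕ, (k : ℤ) = w - a - b := ⟨(w - a - b).toNat, by omega⟩
  have hmap := (hHL k (a + k) (b + k) (by omega)).1
  rw [hq _ _ (by omega), Submodule.map_bot, add_sub_cancel_right, add_sub_cancel_right] at hmap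
  exact hne hmap.symm

theorem le_fst_of_ne_bot (hHL : IsHardLefschetz N I w)
    (hq : ∀ p q : ℤ, w - c + 1 ≤ q → I p q = ⊥) {a b : ℤ} (hne : I a b ≠ ⊥) : c ≤ a := by
  rcases le_or_gt (a + b) w with hab | hab
  · exact hHL.le_fst_of_add_le hq hab hne
  obtain ⟨k, hk⟩ : ∃ k : ℕ, (k : ℤ) = a + b - w := ⟨(a + b - w).toNat, by omega⟩
  obtain ⟨hmap, hinj⟩ := hHL k a b (by omega)
  obtain ⟨x, hx, hx0⟩ := Submodule.ne_bot_iff _ |>.1 hne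
  have hlow : I (a - k) (b - k) ≠ ⊥ :=
    Submodule.ne_bot_iff _ |>.2
      ⟨(N ^ k) x, hmap ▸ Submodule.mem_map_of_mem hx, fun h => hx0 (hinj x hx h)⟩
  have := hHL.le_fst_of_add_le hq (by omega) hlow
  omega

theorem pow_apply_eq_zero (hHL : IsHardLefschetz N I w)
    (hN : ∀ p q : ℤ, ∀ x ∈ I p q, N x ∈ I (p - 1) (q - 1))
    (hp : ∀ p q : ℤ, w - c + 1 ≤ p → I p q = ⊥) (hq : ∀ p q : ℤ, w - c + 1 ≤ q → I p q = ⊥)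
    {m : ℕ} (hm : w - 2 * c + 1 ≤ m) {p q : ℤ} {x : V} (hx : x ∈ I p q) : (N ^ m) x = 0 := by
  rcases le_or_gt p (w - c) with hpw | hpw
  · have hlow : I (p - m) (q - m) = ⊥ := by
      by_contra hne
      have := hHL.le_fst_of_ne_bot hq hne
      omega
    simpa [hlow] using pow_apply_mem_of_forall_apply_mem hN m hx
  · rw [hp p q (by omega), Submodule.mem_bot] at hx
    rw [hx, map_zero]

end IsHardLefschetz

end Bigrading

theorem stmt_15_general (V : Type*) [AddCommGroup V] [Module ℂ V] [FiniteDimensional ℂ V]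
    (w c : ℕ)
    (N : Module.End ℂ V)
    (I : ℤ → ℤ → Submodule ℂ V)
    (hinternal : DirectSum.IsInternal fun pq : ℤ × ℤ => I pq.1 pq.2)
    (hsym : ∀ p q : ℤ, Module.finrank ℂ (I p q) = Module.finrank ℂ (I q p))
    (hN : ∀ p q : ℤ, ∀ x ∈ I p q, N x ∈ I (p - 1) (q - 1))
    (hHL : ∀ (k : ℕ) (p q : ℤ), p + q = (w : ℤ) + k →
      (Submodule.map ((N ^ k : Module.End ℂ V) : V →ₗ[ℂ] V) (I p q)
          = I (p - k) (q - k)) ∧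
      (∀ x ∈ I p q, (N ^ k) x = 0 → x = 0))
    (hF : ∀ p q : ℤ, (w : ℤ) - c + 1 ≤ p → I p q = ⊥) :
    N ^ (w - 2 * c + 2) = 0 := by
  have hF' : ∀ p q : ℤ, (w : ℤ) - c + 1 ≤ q → I p q = ⊥ := fun p q hq =>
    Submodule.finrank_eq_zero.1 (by rw [hsym, hF q p hq, finrank_bot])
  refine LinearMap.ker_eq_top.1 (eq_top_iff.2 ?_)
  rw [← hinternal.submodule_iSup_eq_top]
  exact iSup_le fun pq x hx =>
    IsHardLefschetz.pow_apply_eq_zero (c := c) hHL hN hF hF' (by omega) hx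

/-- coniveau bound on the nilpotency index: Let `(V, W, F, N)` be (the
complexification of) a limit mixed Hodge structure of weight `w`, encoded by its Deligne
bigrading `I^{p,q}` (so `W_k = ⊕_{p+q≤k} I^{p,q}` and `F^p = ⊕_{p'≥p} I^{p',q}`), with
`N(I^{p,q}) ⊆ I^{p−1,q−1}`, the conjugation symmetry `dim I^{p,q} = dim I^{q,p}`, and the
hard Lefschetz isomorphisms `N^k : I^{p,q} ≅ I^{p−k,q−k}` for `p + q = w + k`.  If the
underlying variation has coniveau `≥ c ≥ 1`, i.e. `F^{w−c+1} = 0` (meaning `I^{p,q} = 0`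
for `p ≥ w − c + 1`), then `N^{w−2c+2} = 0`. -/
theorem stmt_15 (V : Type*) [AddCommGroup V] [Module ℂ V] [FiniteDimensional ℂ V]
    (w c : ℕ) (hc : 1 ≤ c) (hcw : 2 * c ≤ w)
    (N : Module.End ℂ V)
    (I : ℤ → ℤ → Submodule ℂ V)
    (hinternal : DirectSum.IsInternal fun pq : ℤ × ℤ => I pq.1 pq.2)
    (hbound : ∀ p q : ℤ, p < 0 ∨ q < 0 → I p q = ⊥)
    (hsym : ∀ p q : ℤ, Module.finrank ℂ (I p q) = Module.finrank ℂ (I q p))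
    (hN : ∀ p q : ℤ, ∀ x ∈ I p q, N x ∈ I (p - 1) (q - 1))
    (hHL : ∀ (k : ℕ) (p q : ℤ), p + q = (w : ℤ) + k →
      (Submodule.map ((N ^ k : Module.End ℂ V) : V →ₗ[ℂ] V) (I p q)
          = I (p - k) (q - k)) ∧
      (∀ x ∈ I p q, (N ^ k) x = 0 → x = 0))
    (hF : ∀ p q : ℤ, (w : ℤ) - c + 1 ≤ p → I p q = ⊥) :
    N ^ (w - 2 * c + 2) = 0 :=
  stmt_15_general V w c N I hinternal hsym hN hHL hF
end
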